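/- Let f : D² → ℂ be a continuous map on the closed unit disc, holomorphic on the interior, such that f maps the boundary circle ∂D² into the unit circle S¹. Then f is a finite Blaschke product: there exist θ ∈ ℝ, m ∈ ℕ, and points α_1, ..., α_m in the open unit disc such that f(z) = e^{iθ} ∏_{j=1}^{m} (z - α_j)/(1 - conj(α_j) z) for all z in the closed disc. -/

import Mathlib

/-!
Since `f` has modulus one on the boundary circle, it has no zeros there, so by compactness and the
identity theorem it has finitely many zeros in the disc, all in the interior. Dividing them out
one at a time by `dslope` writes `f` as `∏ (z - αⱼ)` times a zero-free function `g`. On the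
circle `|1 - conj α z| = |z - α|`, so `h = g ∏ (1 - conj αⱼ z)` is zero-free on the closed
disc with `|h| = 1` on the circle. The maximum principle applied to `h` and `1 / h` makes `|h| ≡ 1`,
and then `h` is a unimodular constant.
-/

open Metric Complex ComplexConjugate Set Filter Topology

theorem sep_closure_subset_of_forall_mem_frontier {X : Type*} [TopologicalSpace X] {U : Set X}
    (hU : IsOpen U) {p : X → Prop} (h : ∀ z ∈ frontier U, ¬ p z) :
    {z ∈ closure U | p z} ⊆ U :=
  fun z ⟨hz, hp⟩ => by_contra fun hzU => h z (hU.frontier_eq ▸ ⟨hz, hzU⟩) hp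

section

variable {E : Type*} [NormedAddCommGroup E] [NormedSpace ℂ E]

theorem DiffContOnCl.dslope [CompleteSpace E] {f : ℂ → E} {U : Set ℂ} {a : ℂ}
    (hf : DiffContOnCl ℂ f U) (hU : IsOpen U) (ha : a ∈ U) : DiffContOnCl ℂ (dslope f a) U :=
  ⟨(differentiableOn_dslope (hU.mem_nhds ha)).mpr hf.differentiableOn,
    (continuousOn_dslope (mem_of_superset (hU.mem_nhds ha) subset_closure)).mpr
      ⟨hf.continuousOn, hf.differentiableAt hU ha⟩⟩

theorem analyticOrderAt_ne_top_of_eventually_zero_mem {f : ℂ → E} {z : ℂ} {s : Set ℂ}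
    (hs : s.Finite) (h : ∀ᶠ w in 𝓝 z, f w = 0 → w ∈ s) : analyticOrderAt f z ≠ ⊤ := by
  intro htop
  have hmem : s ∈ 𝓝 z := by
    filter_upwards [h, analyticOrderAt_eq_top.mp htop] with w hw hw0 using hw hw0
  exact infinite_of_mem_nhds z hmem hs

theorem DiffContOnCl.finite_zeros [CompleteSpace E] {f : ℂ → E} {U : Set ℂ}
    (hf : DiffContOnCl ℂ f U) (hUo : IsOpen U) (hUc : IsPreconnected U)
    (hUb : Bornology.IsBounded U) (hfr : ∀ z ∈ frontier U, f z ≠ 0) :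
    {z ∈ closure U | f z = 0}.Finite := by
  set Z := {z ∈ closure U | f z = 0}
  have hZ : IsClosed Z :=
    hf.continuousOn.preimage_isClosed_of_isClosed isClosed_closure isClosed_singleton
  have hZU : Z ⊆ U := sep_closure_subset_of_forall_mem_frontier hUo hfr
  by_contra hinf
  obtain ⟨x, hxZ, hacc⟩ := Set.Infinite.exists_accPt_of_subset_isCompact hinf
    (hUb.isCompact_closure.of_isClosed_subset hZ (sep_subset _ _)) subset_rfl
  have hU0 : EqOn f 0 U :=
    (hf.differentiableOn.analyticOnNhd hUo).eqOn_zero_of_preconnected_of_frequently_eq_zero hUc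
      (hZU hxZ) ((accPt_iff_frequently_nhdsNE.mp hacc).mono fun _ hw => hw.2)
  -- `f` then vanishes on `closure U ⊆ Z ⊆ U`, so `U` is clopen and hence all of `ℂ`.
  have hclU : closure U ⊆ U := fun z hz =>
    hZU ⟨hz, hU0.of_subset_closure hf.continuousOn continuousOn_const subset_closure
      subset_rfl hz⟩
  have hUuniv : U = univ :=
    IsClopen.eq_univ ⟨closure_subset_iff_isClosed.mp hclU, hUo⟩ ⟨x, hZU hxZ⟩
  exact NormedSpace.unbounded_univ ℝ ℂ (hUuniv ▸ hUb)

end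

theorem analyticOrderNatAt_sub_const_mul {𝕜 : Type*} [NontriviallyNormedField 𝕜] [DecidableEq 𝕜]
    {g : 𝕜 → 𝕜} {a z : 𝕜} (hg : AnalyticAt 𝕜 g z) (hg' : analyticOrderAt g z ≠ ⊤) :
    analyticOrderNatAt (fun w => (w - a) * g w) z =
      analyticOrderNatAt g z + if z = a then 1 else 0 := by
  have hlin : analyticOrderAt (· - a) z = if z = a then 1 else 0 := by
    split_ifs with h
    · subst h; exact analyticOrderAt_id_sub_const_self
    · exact analyticOrderAt_id_sub_const_of_ne h
  have := analyticOrderNatAt_mul (f := (· - a)) (by fun_prop) hg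
    (by rw [hlin]; split_ifs <;> simp) hg'
  rw [show (fun w => (w - a) * g w) = (· - a) * g from rfl, this, add_comm]
  simp only [analyticOrderNatAt, hlin]
  split_ifs <;> rfl

theorem DiffContOnCl.exists_eq_prod_sub_mul_of_zeros_subset {U : Set ℂ} (hU : IsOpen U)
    {s : Finset ℂ} (hs : ↑s ⊆ U) {f : ℂ → ℂ} (hf : DiffContOnCl ℂ f U)
    (hzeros : ∀ z ∈ closure U, f z = 0 → z ∈ s) :
    ∃ (m : ℕ) (α : Fin m → ℂ) (g : ℂ → ℂ), (∀ j, α j ∈ U) ∧ DiffContOnCl ℂ g U ∧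
      (∀ z ∈ closure U, g z ≠ 0) ∧ ∀ z, f z = (∏ j, (z - α j)) * g z := by
  induction hn : ∑ z ∈ s, analyticOrderNatAt f z using Nat.strong_induction_on
    generalizing f with
  | _ n ih =>
  by_cases hne : ∀ z ∈ closure U, f z ≠ 0
  · exact ⟨0, Fin.elim0, f, fun j => j.elim0, hf, hne, fun z => by simp⟩
  push Not at hne
  obtain ⟨a, haU, ha0⟩ := hne
  have has : a ∈ s := hzeros a haU ha0
  set g := _root_.dslope f a
  have hfg (z : ℂ) : f z = (z - a) * g z := (sub_smul_dslope_of_zero ha0 z).symm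
  have hg : DiffContOnCl ℂ g U := hf.dslope hU (hs has)
  have hgzeros : ∀ z ∈ closure U, g z = 0 → z ∈ s := fun z hz hz0 =>
    hzeros z hz (by rw [hfg, hz0, mul_zero])
  have hord : ∀ z ∈ s,
      analyticOrderNatAt f z = analyticOrderNatAt g z + if z = a then 1 else 0 := by
    intro z hz
    have hgz : AnalyticAt ℂ g z := hg.differentiableOn.analyticAt (hU.mem_nhds (hs hz))
    have hfin : analyticOrderAt g z ≠ ⊤ :=
      analyticOrderAt_ne_top_of_eventually_zero_mem s.finite_toSet <| by
        filter_upwards [hU.mem_nhds (hs hz)] with w hw using hgzeros w (subset_closure hw)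
    rw [show f = fun w => (w - a) * g w from funext hfg]
    exact analyticOrderNatAt_sub_const_mul hgz hfin
  have hlt : ∑ z ∈ s, analyticOrderNatAt g z < n := by
    rw [← hn, Finset.sum_congr rfl hord, Finset.sum_add_distrib, Finset.sum_ite_eq' s a,
      if_pos has]
    exact Nat.lt_succ_self _
  obtain ⟨m, α, h, hαU, hh, hh0, hgh⟩ := ih _ hlt hg hgzeros rfl
  refine ⟨m + 1, Fin.cons a α, h, Fin.cases (hs has) hαU, hh, hh0, fun z => ?_⟩
  rw [hfg, hgh]
  simp only [Fin.prod_univ_succ, Fin.cons_zero, Fin.cons_succ]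
  ring

theorem DiffContOnCl.exists_eq_prod_sub_mul {f : ℂ → ℂ} {U : Set ℂ} (hf : DiffContOnCl ℂ f U)
    (hUo : IsOpen U) (hUc : IsPreconnected U) (hUb : Bornology.IsBounded U)
    (hfr : ∀ z ∈ frontier U, f z ≠ 0) :
    ∃ (m : ℕ) (α : Fin m → ℂ) (g : ℂ → ℂ), (∀ j, α j ∈ U) ∧ DiffContOnCl ℂ g U ∧
      (∀ z ∈ closure U, g z ≠ 0) ∧ ∀ z, f z = (∏ j, (z - α j)) * g z :=
  have hfin := hf.finite_zeros hUo hUc hUb hfr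
  hf.exists_eq_prod_sub_mul_of_zeros_subset hUo
    (by simpa using sep_closure_subset_of_forall_mem_frontier hUo hfr)
    fun z hz h0 => hfin.mem_toFinset.mpr ⟨hz, h0⟩

theorem DiffContOnCl.exists_eqOn_exp_mul_I {f : ℂ → ℂ} {U : Set ℂ} (hf : DiffContOnCl ℂ f U)
    (hUo : IsOpen U) (hUc : IsPreconnected U) (hUb : Bornology.IsBounded U)
    (hf0 : ∀ z ∈ closure U, f z ≠ 0) (hfr : ∀ z ∈ frontier U, ‖f z‖ = 1) :
    ∃ θ : ℝ, ∀ z ∈ closure U, f z = exp (θ * I) := by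
  have hnorm : ∀ z ∈ closure U, ‖f z‖ = 1 := by
    intro z hz
    refine le_antisymm (norm_le_of_forall_mem_frontier_norm_le hUb hf
      (fun w hw => (hfr w hw).le) hz) ?_
    have hinv : ‖(f z)⁻¹‖ ≤ 1 := norm_le_of_forall_mem_frontier_norm_le hUb (hf.inv hf0)
      (fun w hw => by simp [hfr w hw]) hz
    rwa [norm_inv, inv_le_one₀ (norm_pos_iff.mpr (hf0 z hz))] at hinv
  rcases U.eq_empty_or_nonempty with rfl | ⟨c, hc⟩
  · exact ⟨0, by simp⟩
  have hmax : IsMaxOn (norm ∘ f) U c := fun w hw => by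
    simp [hnorm w (subset_closure hw), hnorm c (subset_closure hc)]
  refine ⟨arg (f c), fun z hz => ?_⟩
  rw [eqOn_closure_of_isPreconnected_of_isMaxOn_norm hUc hUo hf hc hmax hz]
  simpa [hnorm c (subset_closure hc)] using (norm_mul_exp_arg_mul_I (f c)).symm

theorem norm_one_sub_conj_mul_of_norm_eq_one (a : ℂ) {z : ℂ} (hz : ‖z‖ = 1) :
    ‖1 - conj a * z‖ = ‖z - a‖ := by
  have hzz : conj z * z = 1 := by
    rw [mul_comm, mul_conj, normSq_eq_norm_sq, hz]; norm_num
  rw [show 1 - conj a * z = conj (z - a) * z by rw [map_sub]; linear_combination -hzz,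
    norm_mul, RCLike.norm_conj, hz, mul_one]

theorem one_sub_conj_mul_ne_zero {a z : ℂ} (ha : ‖a‖ < 1) (hz : ‖z‖ ≤ 1) :
    1 - conj a * z ≠ 0 := by
  refine sub_ne_zero.mpr fun h => ?_
  have : ‖conj a * z‖ < 1 := by
    rw [norm_mul, RCLike.norm_conj]
    exact lt_of_le_of_lt (mul_le_of_le_one_right (norm_nonneg a) hz) ha
  simp [← h] at this

/-- Classification of holomorphic discs in ℂ with boundary on the unit circle:
a map continuous on the closed unit disc, holomorphic on the open disc, sending the boundary
circle into the unit circle, is a finite Blaschke product. -/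
theorem stmt1 (f : ℂ → ℂ)
    (hc : ContinuousOn f (closedBall (0 : ℂ) 1))
    (hd : DifferentiableOn ℂ f (ball (0 : ℂ) 1))
    (hb : ∀ z : ℂ, ‖z‖ = 1 → ‖f z‖ = 1) :
    ∃ (θ : ℝ) (m : ℕ) (α : Fin m → ℂ), (∀ j, ‖α j‖ < 1) ∧
      ∀ z ∈ closedBall (0 : ℂ) 1,
        f z = Complex.exp (θ * I) * ∏ j, (z - α j) / (1 - (starRingEnd ℂ) (α j) * z) := by
  have hcl : closure (ball (0 : ℂ) 1) = closedBall 0 1 := closure_ball 0 one_ne_zero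
  have hfr : frontier (ball (0 : ℂ) 1) = sphere 0 1 := frontier_ball 0 one_ne_zero
  have hf : DiffContOnCl ℂ f (ball 0 1) := DiffContOnCl.mk_ball hd hc
  have hf1 : ∀ z ∈ frontier (ball (0 : ℂ) 1), ‖f z‖ = 1 := fun z hz =>
    hb z (by rwa [hfr, mem_sphere_zero_iff_norm] at hz)
  obtain ⟨m, α, g, hαU, hg, hg0, hfg⟩ := hf.exists_eq_prod_sub_mul isOpen_ball
    (convex_ball 0 1).isPreconnected isBounded_ball fun z hz h0 => by simpa [h0] using hf1 z hz
  have hα (j : Fin m) : ‖α j‖ < 1 := mem_ball_zero_iff.mp (hαU j)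
  set P : ℂ → ℂ := fun z => ∏ j, (1 - conj (α j) * z)
  have hP0 : ∀ z ∈ closedBall (0 : ℂ) 1, P z ≠ 0 := fun z hz =>
    Finset.prod_ne_zero_iff.mpr fun j _ =>
      one_sub_conj_mul_ne_zero (hα j) (mem_closedBall_zero_iff.mp hz)
  have hgP : DiffContOnCl ℂ (fun z => P z * g z) (ball 0 1) :=
    (Differentiable.diffContOnCl (f := P) (by fun_prop)).smul hg
  obtain ⟨θ, hθ⟩ := hgP.exists_eqOn_exp_mul_I isOpen_ball (convex_ball 0 1).isPreconnected
    isBounded_ball (fun z hz => mul_ne_zero (hP0 z (hcl ▸ hz)) (hg0 z hz)) fun z hz => by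
      have hz1 : ‖z‖ = 1 := by rwa [hfr, mem_sphere_zero_iff_norm] at hz
      rw [← hf1 z hz, hfg, norm_mul, norm_mul, norm_prod, norm_prod]
      simp only [norm_one_sub_conj_mul_of_norm_eq_one _ hz1]
  refine ⟨θ, m, α, hα, fun z hz => ?_⟩
  rw [← hθ z (hcl ▸ hz), hfg, Finset.prod_div_distrib, mul_div_assoc', eq_div_iff (hP0 z hz)]
  ring
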